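/- arXiv:1409.3271 — 6 statements merged into one kernel-verified Lean document; each statement's English description precedes it below -/
import Mathlib

section
/- Let t, q ∈ ℝ and α > −q²/2, and set c₁ = e^{−2t}√((8/3)(α + q²/2)), c₂ = α, c₃ = (e^{2t}/6)√((8/3)(α + q²/2))(α − q²), and c₄ = e^{4t}(α − q²)²/36. Define F(r) = e^{−4t} + c₁/r + c₂/r² + c₃/r³ + c₄/r⁴ for r > 0. Then for every r > 0 with F(r) ≠ 0, F''(r) + (2/r)F'(r) = −q²/r⁴ + (3/4)·F'(r)²/F(r). -/
/-!
The expansion is a perfect square, `F = G²` with `G(r) = e^{-2t} + b/r + k/r²`,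
`b = √((8/3)(α + q²/2))/2` and `k = e^{2t}(α - q²)/6`. Since `F'²/F = 4G'²`, the ODE for
`F = G²` reduces to `2G(G'' + 2G'/r) = G'² - q²/r⁴`. The radial Laplacian kills `1/r` and sends
`1/r²` to `2/r⁴`, so for `G = a + b/r + k/r²` this is the polynomial identity in `1/r` that holds
exactly when `4ka = b² - q²`.
-/

open Filter Topology

lemma deriv_deriv_sq {G G' : ℝ → ℝ} {g'' r : ℝ} (hG : ∀ᶠ x in 𝓝 r, HasDerivAt G (G' x) x)
    (hG' : HasDerivAt G' g'' r) :
    deriv (deriv fun x => G x ^ 2) r = 2 * G' r ^ 2 + 2 * G r * g'' := by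
  have hderiv : deriv (fun x => G x ^ 2) =ᶠ[𝓝 r] fun x => 2 * G x * G' x := by
    filter_upwards [hG] with x hx
    exact (hx.pow 2).deriv.trans (by ring)
  rw [hderiv.deriv_eq]
  exact ((hG.self_of_nhds.const_mul 2).mul hG').deriv.trans (by ring)

section InverseQuadratic

variable (a b k : ℝ) {x : ℝ}

lemma hasDerivAt_inv_quadratic (hx : x ≠ 0) :
    HasDerivAt (fun r => a + b / r + k / r ^ 2) (-b / x ^ 2 - 2 * k / x ^ 3) x := by
  have h := ((hasDerivAt_const x a).add ((hasDerivAt_const x b).div (hasDerivAt_id' x) hx)).add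
    ((hasDerivAt_const x k).div (hasDerivAt_pow 2 x) (pow_ne_zero 2 hx))
  refine h.congr_deriv ?_
  field_simp
  ring

lemma hasDerivAt_inv_quadratic_deriv (hx : x ≠ 0) :
    HasDerivAt (fun r => -b / r ^ 2 - 2 * k / r ^ 3) (2 * b / x ^ 3 + 6 * k / x ^ 4) x := by
  have h := ((hasDerivAt_const x (-b)).div (hasDerivAt_pow 2 x) (pow_ne_zero 2 hx)).sub
    ((hasDerivAt_const x (2 * k)).div (hasDerivAt_pow 3 x) (pow_ne_zero 3 hx))
  refine h.congr_deriv ?_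
  field_simp
  ring

lemma deriv_deriv_sq_inv_quadratic (hx : x ≠ 0) :
    deriv (deriv fun r => (a + b / r + k / r ^ 2) ^ 2) x =
      2 * (-b / x ^ 2 - 2 * k / x ^ 3) ^ 2 +
        2 * (a + b / x + k / x ^ 2) * (2 * b / x ^ 3 + 6 * k / x ^ 4) :=
  deriv_deriv_sq (G' := fun r => -b / r ^ 2 - 2 * k / r ^ 3)
    ((eventually_ne_nhds hx).mono fun _ hy => hasDerivAt_inv_quadratic a b k hy)
    (hasDerivAt_inv_quadratic_deriv b k hx)

theorem sq_inv_quadratic_solves_radial_ode (q : ℝ) (hcoef : 4 * k * a = b ^ 2 - q ^ 2)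
    (hx : x ≠ 0) (hG : a + b / x + k / x ^ 2 ≠ 0) :
    let F : ℝ → ℝ := fun r => (a + b / r + k / r ^ 2) ^ 2
    deriv (deriv F) x + (2 / x) * deriv F x =
      -q ^ 2 / x ^ 4 + (3 / 4) * (deriv F x) ^ 2 / F x := by
  intro F
  set G := a + b / x + k / x ^ 2
  set G' := -b / x ^ 2 - 2 * k / x ^ 3
  have hlaplacian : (2 * b / x ^ 3 + 6 * k / x ^ 4) + 2 / x * G' = 2 * k / x ^ 4 := by ring
  have hquadratic : 4 * k * G / x ^ 4 = G' ^ 2 - q ^ 2 / x ^ 4 := by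
    linear_combination hcoef / x ^ 4
  have hF' : deriv F x = 2 * G * G' :=
    ((hasDerivAt_inv_quadratic a b k hx).pow 2).deriv.trans (by ring)
  calc deriv (deriv F) x + 2 / x * deriv F x
      = 2 * G' ^ 2 + 2 * G * ((2 * b / x ^ 3 + 6 * k / x ^ 4) + 2 / x * G') := by
        rw [deriv_deriv_sq_inv_quadratic a b k hx, hF']
        ring
    _ = -q ^ 2 / x ^ 4 + 3 * G' ^ 2 := by
        rw [hlaplacian]
        linear_combination hquadratic
    _ = -q ^ 2 / x ^ 4 + (3 / 4) * (deriv F x) ^ 2 / F x := by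
        rw [hF', show F x = G ^ 2 from rfl]
        field_simp
        ring

end InverseQuadratic

/-- The explicit four-term expansion `F(r) = e^{−4t} + c₁/r + c₂/r² + c₃/r³ + c₄/r⁴`
with the stated coefficients is an exact solution of the radial ODE
`F'' + (2/r)F' = −q²/r⁴ + (3/4)F'²/F` wherever `F` does not vanish. -/
theorem radial_expansion_solves_ode (t q α : ℝ) (hα : -q ^ 2 / 2 < α) :
    let c₁ : ℝ := Real.exp (-2 * t) * Real.sqrt ((8 / 3) * (α + q ^ 2 / 2))
    let c₂ : ℝ := α
    let c₃ : ℝ := (Real.exp (2 * t) / 6) * Real.sqrt ((8 / 3) * (α + q ^ 2 / 2)) * (α - q ^ 2)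
    let c₄ : ℝ := Real.exp (4 * t) * (α - q ^ 2) ^ 2 / 36
    let F : ℝ → ℝ := fun r =>
      Real.exp (-4 * t) + c₁ / r + c₂ / r ^ 2 + c₃ / r ^ 3 + c₄ / r ^ 4
    ∀ r : ℝ, 0 < r → F r ≠ 0 →
      deriv (deriv F) r + (2 / r) * deriv F r =
        -q ^ 2 / r ^ 4 + (3 / 4) * (deriv F r) ^ 2 / F r := by
  intro c₁ c₂ c₃ c₄ F r hr hF
  set s := Real.sqrt ((8 / 3) * (α + q ^ 2 / 2))
  have hs : s ^ 2 = (8 / 3) * (α + q ^ 2 / 2) := Real.sq_sqrt (by linarith)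
  have hexp_mul : Real.exp (-2 * t) * Real.exp (2 * t) = 1 := by
    rw [← Real.exp_add]; simp
  have hexp_neg : Real.exp (-2 * t) ^ 2 = Real.exp (-4 * t) := by
    rw [← Real.exp_nat_mul]; ring_nf
  have hexp_pos : Real.exp (2 * t) ^ 2 = Real.exp (4 * t) := by
    rw [← Real.exp_nat_mul]; ring_nf
  have hF_sq : F = fun r =>
      (Real.exp (-2 * t) + (s / 2) / r + (Real.exp (2 * t) * (α - q ^ 2) / 6) / r ^ 2) ^ 2 := by
    funext r
    linear_combination -hexp_neg - hs / (4 * r ^ 2)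
      - (α - q ^ 2) / (3 * r ^ 2) * hexp_mul - (α - q ^ 2) ^ 2 / (36 * r ^ 4) * hexp_pos
  rw [hF_sq] at hF ⊢
  refine sq_inv_quadratic_solves_radial_ode _ _ _ q ?_ hr.ne'
    ((pow_ne_zero_iff two_ne_zero).mp hF)
  linear_combination (2 * (α - q ^ 2) / 3) * hexp_mul - hs / 4
end

section
/- Let t, q ∈ ℝ, r₀ > 0, and let α be a real number with α ≥ q² + 6e^{−4t}r₀². Define F_α(r) = e^{−4t} + e^{−2t}√((8/3)(α + q²/2))/r + α/r² + (e^{2t}/6)√((8/3)(α + q²/2))(α − q²)/r³ + e^{4t}(α − q²)²/(36 r⁴). Then for all r > 0, F_α(r) ≥ (e^{−2t} + √(4e^{−4t}r₀² + q²)/r + e^{−2t}r₀²/r²)². -/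
/-!
Every coefficient of the expansion `F_α` in powers of `1/r` is a nonnegative, nondecreasing
function of `α` on `[q², ∞)`, and at `α = q² + 6e^{−4t}r₀²`, where
`√((8/3)(α + q²/2)) = 2√(4e^{−4t}r₀² + q²)`, the expansion is exactly the square of
`e^{−2t} + √(4e^{−4t}r₀² + q²)/r + e^{−2t}r₀²/r²`.
-/

open Real

noncomputable def expansion (t q α r : ℝ) : ℝ :=
  exp (-4 * t)
    + exp (-2 * t) * √((8 / 3) * (α + q ^ 2 / 2)) / r
    + α / r ^ 2
    + (exp (2 * t) / 6) * √((8 / 3) * (α + q ^ 2 / 2)) * (α - q ^ 2) / r ^ 3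
    + exp (4 * t) * (α - q ^ 2) ^ 2 / (36 * r ^ 4)

theorem expansion_mono {t q α β r : ℝ} (hr : 0 ≤ r) (hα : q ^ 2 ≤ α) (hαβ : α ≤ β) :
    expansion t q α r ≤ expansion t q β r := by
  have hqα : 0 ≤ α - q ^ 2 := sub_nonneg.2 hα
  unfold expansion
  gcongr

theorem expansion_eq_RN_sq (t q r₀ r : ℝ) :
    expansion t q (q ^ 2 + 6 * exp (-4 * t) * r₀ ^ 2) r
      = (exp (-2 * t) + √(4 * exp (-4 * t) * r₀ ^ 2 + q ^ 2) / r
          + exp (-2 * t) * r₀ ^ 2 / r ^ 2) ^ 2 := by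
  have ha : 0 < exp (-2 * t) := exp_pos _
  have h4 : exp (-4 * t) = exp (-2 * t) ^ 2 := by rw [← exp_nat_mul]; ring_nf
  have h2 : exp (2 * t) = (exp (-2 * t))⁻¹ := by rw [← exp_neg]; ring_nf
  have h4' : exp (4 * t) = (exp (-2 * t) ^ 2)⁻¹ := by rw [← h4, ← exp_neg]; ring_nf
  unfold expansion
  rw [h4, h2, h4']
  generalize exp (-2 * t) = a at ha ⊢
  have hb : √(4 * a ^ 2 * r₀ ^ 2 + q ^ 2) ^ 2 = 4 * a ^ 2 * r₀ ^ 2 + q ^ 2 :=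
    sq_sqrt (by positivity)
  have hs : √((8 / 3) * (q ^ 2 + 6 * a ^ 2 * r₀ ^ 2 + q ^ 2 / 2))
      = 2 * √(4 * a ^ 2 * r₀ ^ 2 + q ^ 2) := by
    rw [← sqrt_sq (by positivity : 0 ≤ 2 * √(4 * a ^ 2 * r₀ ^ 2 + q ^ 2)), mul_pow, hb]
    ring_nf
  rw [hs]
  generalize √(4 * a ^ 2 * r₀ ^ 2 + q ^ 2) = b at hb ⊢
  simp only [div_eq_mul_inv, mul_inv, ← inv_pow]
  generalize r⁻¹ = x
  field_simp
  linear_combination (-216 * a ^ 2 * x ^ 2) * hb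

theorem expansion_ge_RN_of_alpha_ge_general (t q r₀ α : ℝ)
    (hα : q ^ 2 + 6 * Real.exp (-4 * t) * r₀ ^ 2 ≤ α) :
    ∀ r : ℝ, 0 < r →
      (Real.exp (-2 * t) + Real.sqrt (4 * Real.exp (-4 * t) * r₀ ^ 2 + q ^ 2) / r
          + Real.exp (-2 * t) * r₀ ^ 2 / r ^ 2) ^ 2 ≤
        Real.exp (-4 * t)
          + Real.exp (-2 * t) * Real.sqrt ((8 / 3) * (α + q ^ 2 / 2)) / r
          + α / r ^ 2
          + (Real.exp (2 * t) / 6) * Real.sqrt ((8 / 3) * (α + q ^ 2 / 2)) * (α - q ^ 2) / r ^ 3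
          + Real.exp (4 * t) * (α - q ^ 2) ^ 2 / (36 * r ^ 4) := by
  intro r hr
  rw [← expansion_eq_RN_sq]
  exact expansion_mono hr.le (le_add_of_nonneg_right (by positivity)) hα

/-- Coefficient-by-coefficient comparison: if `α ≥ q² + 6e^{−4t}r₀²`, then the
radial expansion `F_α(r)` dominates the fourth power of the Reissner–Nordström
conformal factor for all `r > 0`. -/
theorem expansion_ge_RN_of_alpha_ge (t q r₀ α : ℝ) (hr₀ : 0 < r₀)
    (hα : q ^ 2 + 6 * Real.exp (-4 * t) * r₀ ^ 2 ≤ α) :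
    ∀ r : ℝ, 0 < r →
      (Real.exp (-2 * t) + Real.sqrt (4 * Real.exp (-4 * t) * r₀ ^ 2 + q ^ 2) / r
          + Real.exp (-2 * t) * r₀ ^ 2 / r ^ 2) ^ 2 ≤
        Real.exp (-4 * t)
          + Real.exp (-2 * t) * Real.sqrt ((8 / 3) * (α + q ^ 2 / 2)) / r
          + α / r ^ 2
          + (Real.exp (2 * t) / 6) * Real.sqrt ((8 / 3) * (α + q ^ 2 / 2)) * (α - q ^ 2) / r ^ 3
          + Real.exp (4 * t) * (α - q ^ 2) ^ 2 / (36 * r ^ 4) :=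
  expansion_ge_RN_of_alpha_ge_general t q r₀ α hα
end

section
/- Let A₀ > 0 and q ∈ ℝ satisfy A₀ > 4πq². Then there exists ε₀ > 0 such that for every ε ∈ (0, ε₀) and every α ≥ q²: if A₀/(4π) ≤ ε²A₀ + ε√A₀·√((8/3)(α + q²/2)) + α + ((α − q²)/(6ε√A₀))·√((8/3)(α + q²/2)) + (α − q²)²/(36 ε² A₀), then α − q² ≥ 6 ε² A₀. -/
/-!
Write `d = α - q²`. If `d < 6ε²A₀`, each of the `d`-dependent terms of the average is dominated
by its `ε`-counterpart, and `√((8/3)(α + q²/2)) = √(4q² + (8/3)d) ≤ √(4q² + 16ε²A₀)`; so the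
average is at most `q² + 8ε²A₀ + 2ε√A₀ √(4q² + 16ε²A₀)`. This bound tends to `q²` as `ε → 0`,
while `A₀/(4π) > q²`, so it cannot dominate `A₀/(4π)` for small `ε`.
-/

open Filter Topology

/-- The surface average of the radial expansion `F_α` at radius `ε√A e^{2t}`. -/
noncomputable def radialExpansionAverage (A q ε α : ℝ) : ℝ :=
  ε ^ 2 * A + ε * Real.sqrt A * Real.sqrt ((8 / 3) * (α + q ^ 2 / 2)) + α
    + ((α - q ^ 2) / (6 * ε * Real.sqrt A)) * Real.sqrt ((8 / 3) * (α + q ^ 2 / 2))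
    + (α - q ^ 2) ^ 2 / (36 * ε ^ 2 * A)

theorem radialExpansionAverage_le {A q ε α : ℝ} (hA : 0 < A) (hε : 0 < ε) (hα : q ^ 2 ≤ α)
    (hd : α - q ^ 2 ≤ 6 * ε ^ 2 * A) :
    radialExpansionAverage A q ε α ≤
      q ^ 2 + 8 * ε ^ 2 * A + 2 * ε * Real.sqrt A * Real.sqrt (4 * q ^ 2 + 16 * ε ^ 2 * A) := by
  set s := Real.sqrt A
  set B := Real.sqrt ((8 / 3) * (α + q ^ 2 / 2))
  set C := Real.sqrt (4 * q ^ 2 + 16 * ε ^ 2 * A)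
  have hs : 0 < s := Real.sqrt_pos.2 hA
  have hs2 : s ^ 2 = A := Real.sq_sqrt hA.le
  have hB : B ≤ C := Real.sqrt_le_sqrt (by linarith)
  have hlin : (α - q ^ 2) / (6 * ε * s) ≤ ε * s := by
    rw [div_le_iff₀ (by positivity)]
    nlinarith
  have hquad : (α - q ^ 2) ^ 2 / (36 * ε ^ 2 * A) ≤ ε ^ 2 * A := by
    rw [div_le_iff₀ (by positivity)]
    nlinarith [mul_le_mul hd hd (sub_nonneg.2 hα) (by positivity)]
  unfold radialExpansionAverage
  calc ε ^ 2 * A + ε * s * B + α + (α - q ^ 2) / (6 * ε * s) * B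
        + (α - q ^ 2) ^ 2 / (36 * ε ^ 2 * A)
      ≤ ε ^ 2 * A + ε * s * C + α + ε * s * C + ε ^ 2 * A := by
        gcongr
    _ ≤ q ^ 2 + 8 * ε ^ 2 * A + 2 * ε * s * C := by linarith

theorem eventually_radialExpansionAverage_bound_lt {A q c : ℝ} (h : q ^ 2 < c) :
    ∀ᶠ ε in 𝓝 0,
      q ^ 2 + 8 * ε ^ 2 * A + 2 * ε * Real.sqrt A * Real.sqrt (4 * q ^ 2 + 16 * ε ^ 2 * A) < c := by
  have hcont : Continuous fun ε : ℝ =>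
      q ^ 2 + 8 * ε ^ 2 * A + 2 * ε * Real.sqrt A * Real.sqrt (4 * q ^ 2 + 16 * ε ^ 2 * A) := by
    fun_prop
  refine (hcont.tendsto 0).eventually_lt_const ?_
  simpa using h

/-- The key quantitative step of the comparison lemma: if `A₀ > 4πq²`, then for
all sufficiently small `ε > 0` and every `α ≥ q²`, the surface-average inequality
for `A₀/(4π)` forces `α − q² ≥ 6ε²A₀`. -/
theorem area_charge_forces_alpha_bound (A₀ q : ℝ) (hA₀ : 0 < A₀)
    (hAq : 4 * Real.pi * q ^ 2 < A₀) :
    ∃ ε₀ > 0, ∀ ε : ℝ, 0 < ε → ε < ε₀ → ∀ α : ℝ, q ^ 2 ≤ α →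
      A₀ / (4 * Real.pi) ≤
          ε ^ 2 * A₀ + ε * Real.sqrt A₀ * Real.sqrt ((8 / 3) * (α + q ^ 2 / 2)) + α
            + ((α - q ^ 2) / (6 * ε * Real.sqrt A₀)) * Real.sqrt ((8 / 3) * (α + q ^ 2 / 2))
            + (α - q ^ 2) ^ 2 / (36 * ε ^ 2 * A₀) →
        6 * ε ^ 2 * A₀ ≤ α - q ^ 2 := by
  have hq : q ^ 2 < A₀ / (4 * Real.pi) := by
    rw [lt_div_iff₀ (by positivity)]
    linarith
  obtain ⟨ε₀, hε₀, hsmall⟩ :=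
    Metric.eventually_nhds_iff.1 (eventually_radialExpansionAverage_bound_lt (A := A₀) hq)
  refine ⟨ε₀, hε₀, fun ε hε hεε₀ α hα hineq => ?_⟩
  by_contra! hd
  have hlt := hsmall (show dist ε 0 < ε₀ by rwa [Real.dist_0_eq_abs, abs_of_pos hε])
  exact (hineq.trans (radialExpansionAverage_le hA₀ hε hα hd.le)).not_gt hlt
end

section
/- Let m, q ∈ ℝ with m ≥ |q|, let t ∈ ℝ, and define P(r) := e^{−2t} + m/r + e^{2t}(m² − q²)/(4r²) and v(r) := (−e^{−2t} + e^{2t}(m² − q²)/(4r²)) / P(r) for r > 0. Then v is twice differentiable on (0, ∞) and for all r > 0: v''(r) + (2/r)·v'(r) + (P'(r)/P(r))·v'(r) = q²·v(r) / (r⁴·P(r)²). -/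
/-!
Write `a = e^{-2t}`, `k = e^{2t}(m² - q²)`, `P = a + m/r + k/(4r²)` and `v = N/P` with
`N = -a + k/(4r²)`. Since `v'' + (2/r + P'/P) v' = (r² P v')' / (r² P)`, everything hinges on the
flux `F = a m + a k/r + k m/(4r²)`, for which `r² P² v' = -F`. The equation then reduces to the
identity `-F' P + F P' = (m² - a k) N / r²` between rational functions of `r`, and
`m² - a k = q²` because `e^{-2t} e^{2t} = 1`.
-/

open Topology

noncomputable section

def rnConformalFactor (a m k r : ℝ) : ℝ := a + m / r + k / (4 * r ^ 2)

def rnVelocity (a m k r : ℝ) : ℝ := (-a + k / (4 * r ^ 2)) / rnConformalFactor a m k r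

def rnFlux (a m k r : ℝ) : ℝ := a * m + a * k / r + k * m / (4 * r ^ 2)

end

section ConstDiv

variable {𝕜 : Type*} [NontriviallyNormedField 𝕜] {r : 𝕜}

lemma hasDerivAt_const_div (m : 𝕜) (hr : r ≠ 0) :
    HasDerivAt (fun x => m / x) (-(m / r ^ 2)) r :=
  ((hasDerivAt_const r m).fun_div (hasDerivAt_id' r) hr).congr_deriv (by ring)

lemma hasDerivAt_const_div_mul_sq (k : 𝕜) {c : 𝕜} (hc : c ≠ 0) (hr : r ≠ 0) :
    HasDerivAt (fun x => k / (c * x ^ 2)) (-(2 * k / (c * r ^ 3))) r :=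
  ((hasDerivAt_const r k).fun_div ((hasDerivAt_pow 2 r).const_mul c)
    (mul_ne_zero hc (pow_ne_zero 2 hr))).congr_deriv (by field_simp; ring)

end ConstDiv

section ReissnerNordstrom

variable {a m k r : ℝ}

lemma hasDerivAt_rnConformalFactor (hr : r ≠ 0) :
    HasDerivAt (rnConformalFactor a m k) (-(m / r ^ 2) - k / (2 * r ^ 3)) r :=
  (((hasDerivAt_const r a).fun_add (hasDerivAt_const_div m hr)).fun_add
    (hasDerivAt_const_div_mul_sq k four_ne_zero hr)).congr_deriv (by ring)

lemma hasDerivAt_rnFlux (hr : r ≠ 0) :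
    HasDerivAt (rnFlux a m k) (-(a * k / r ^ 2) - k * m / (2 * r ^ 3)) r :=
  (((hasDerivAt_const r (a * m)).fun_add (hasDerivAt_const_div (a * k) hr)).fun_add
    (hasDerivAt_const_div_mul_sq (k * m) four_ne_zero hr)).congr_deriv (by ring)

lemma hasDerivAt_rnVelocity (hr : r ≠ 0) (hP : rnConformalFactor a m k r ≠ 0) :
    HasDerivAt (rnVelocity a m k)
      (-rnFlux a m k r / (r ^ 2 * rnConformalFactor a m k r ^ 2)) r := by
  refine (((hasDerivAt_const r (-a)).fun_add
    (hasDerivAt_const_div_mul_sq k four_ne_zero hr)).fun_div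
      (hasDerivAt_rnConformalFactor hr) hP).congr_deriv ?_
  simp only [rnFlux, rnConformalFactor] at hP ⊢
  field_simp
  ring

lemma deriv_rnVelocity_eventuallyEq (hr : r ≠ 0) (hP : rnConformalFactor a m k r ≠ 0) :
    deriv (rnVelocity a m k) =ᶠ[𝓝 r]
      fun x => -rnFlux a m k x / (x ^ 2 * rnConformalFactor a m k x ^ 2) := by
  filter_upwards [eventually_ne_nhds hr,
    (hasDerivAt_rnConformalFactor hr).continuousAt.eventually_ne hP] with x hx hPx
  exact (hasDerivAt_rnVelocity hx hPx).deriv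

lemma rnFlux_wronskian (hr : r ≠ 0) :
    -(-(a * k / r ^ 2) - k * m / (2 * r ^ 3)) * rnConformalFactor a m k r +
        rnFlux a m k r * (-(m / r ^ 2) - k / (2 * r ^ 3)) =
      (m ^ 2 - a * k) * (-a + k / (4 * r ^ 2)) / r ^ 2 := by
  unfold rnFlux rnConformalFactor
  field_simp
  ring

lemma rnConformalFactor_pos (ha : 0 < a) (hm : 0 ≤ m) (hk : 0 ≤ k) (hr : 0 < r) :
    0 < rnConformalFactor a m k r := by
  unfold rnConformalFactor
  positivity

theorem rnVelocity_radial_equation (hr : r ≠ 0) (hP : rnConformalFactor a m k r ≠ 0) :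
    DifferentiableAt ℝ (rnVelocity a m k) r ∧ DifferentiableAt ℝ (deriv (rnVelocity a m k)) r ∧
      deriv (deriv (rnVelocity a m k)) r + 2 / r * deriv (rnVelocity a m k) r +
          deriv (rnConformalFactor a m k) r / rnConformalFactor a m k r *
            deriv (rnVelocity a m k) r =
        (m ^ 2 - a * k) * rnVelocity a m k r / (r ^ 4 * rnConformalFactor a m k r ^ 2) := by
  have hv := hasDerivAt_rnVelocity hr hP
  have hev := deriv_rnVelocity_eventuallyEq hr hP
  have hw := (hasDerivAt_rnFlux (a := a) (m := m) (k := k) hr).fun_neg.fun_div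
    ((hasDerivAt_pow 2 r).fun_mul ((hasDerivAt_rnConformalFactor hr).fun_pow 2)) (by positivity)
  refine ⟨hv.differentiableAt, hw.differentiableAt.congr_of_eventuallyEq hev, ?_⟩
  rw [hev.deriv_eq, hw.deriv, hv.deriv, (hasDerivAt_rnConformalFactor hr).deriv]
  calc _ = (-(-(a * k / r ^ 2) - k * m / (2 * r ^ 3)) * rnConformalFactor a m k r +
          rnFlux a m k r * (-(m / r ^ 2) - k / (2 * r ^ 3))) /
        (r ^ 2 * rnConformalFactor a m k r ^ 3) := by
        field_simp
        ring
    _ = _ := by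
      rw [rnFlux_wronskian hr, rnVelocity]
      field_simp

end ReissnerNordstrom

/-- The radial form of the equation satisfied by the Reissner–Nordström flow
velocity: `v'' + (2/r)v' + (P'/P)v' = q²v/(r⁴P²)` on `(0, ∞)`. -/
theorem RN_velocity_radial_equation (m q t : ℝ) (hq : |q| ≤ m) :
    let P : ℝ → ℝ := fun r =>
      Real.exp (-2 * t) + m / r + Real.exp (2 * t) * (m ^ 2 - q ^ 2) / (4 * r ^ 2)
    let v : ℝ → ℝ := fun r =>
      (-Real.exp (-2 * t) + Real.exp (2 * t) * (m ^ 2 - q ^ 2) / (4 * r ^ 2)) / P r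
    ∀ r : ℝ, 0 < r →
      DifferentiableAt ℝ v r ∧ DifferentiableAt ℝ (deriv v) r ∧
        deriv (deriv v) r + (2 / r) * deriv v r + (deriv P r / P r) * deriv v r =
          q ^ 2 * v r / (r ^ 4 * (P r) ^ 2) := by
  intro P v r hr
  have hq_sq : q ^ 2 = m ^ 2 - Real.exp (-2 * t) * (Real.exp (2 * t) * (m ^ 2 - q ^ 2)) := by
    rw [← mul_assoc, ← Real.exp_add]
    simp
  have hm : 0 ≤ m := (abs_nonneg q).trans hq
  have hk : 0 ≤ Real.exp (2 * t) * (m ^ 2 - q ^ 2) :=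
    mul_nonneg (Real.exp_pos _).le
      (sub_nonneg.mpr (sq_le_sq' (neg_le_of_abs_le hq) (le_of_abs_le hq)))
  have hP := rnConformalFactor_pos (Real.exp_pos (-2 * t)) hm hk hr
  rw [hq_sq]
  exact rnVelocity_radial_equation hr.ne' hP.ne'
end

section
/- Let m, q ∈ ℝ with m ≥ |q| and t ∈ ℝ. Define W(r) := √(e^{−2t} + m/r + e^{2t}(m² − q²)/(4r²)) for r > 0. Then W is twice differentiable on (0, ∞) and for all r > 0: W''(r) + (2/r)·W'(r) = −q² / (4 r⁴ W(r)³). -/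
/-!
With `a = e^{-2t}` and `c = e^{2t}(m² - q²)/4` one has `W = u/r` for
`u(r) = √(a r² + m r + c)`, and for any `u` the radial Laplacian of `u/r` is `u''/r`.
The square root `u` of a quadratic `a r² + b r + c` satisfies `u'' = (4ac - b²)/(4u³)`;
here `4ac - m² = -q²`, and `u = rW` gives the equation.
-/

open Filter Topology

theorem radial_laplacian_of_eventuallyEq_div {u W : ℝ → ℝ} {r : ℝ} (hr : r ≠ 0)
    (hu : ∀ᶠ x in 𝓝 r, DifferentiableAt ℝ u x) (hu' : DifferentiableAt ℝ (deriv u) r)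
    (hW : W =ᶠ[𝓝 r] fun x => u x / x) :
    DifferentiableAt ℝ W r ∧ DifferentiableAt ℝ (deriv W) r ∧
      deriv (deriv W) r + 2 / r * deriv W r = deriv (deriv u) r / r := by
  have hderiv : deriv W =ᶠ[𝓝 r] fun x => deriv u x / x - u x / x ^ 2 := by
    filter_upwards [hW.eventuallyEq_nhds, hu, eventually_ne_nhds hr] with x hWx hux hx
    rw [hWx.deriv_eq]
    exact ((hux.hasDerivAt.div (hasDerivAt_id' x) hx).congr_deriv (by field_simp)).deriv
  have hderiv2 : HasDerivAt (deriv W)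
      (deriv (deriv u) r / r - deriv u r / r ^ 2 - (deriv u r / r ^ 2 - 2 * u r / r ^ 3)) r := by
    refine ((hu'.hasDerivAt.div (hasDerivAt_id' r) hr).sub
      (hu.self_of_nhds.hasDerivAt.div (hasDerivAt_pow 2 r) (pow_ne_zero 2 hr))).congr_deriv
      ?_ |>.congr_of_eventuallyEq hderiv
    field_simp
    ring
  refine ⟨hW.differentiableAt_iff.mpr (hu.self_of_nhds.div differentiableAt_id hr),
    hderiv2.differentiableAt, ?_⟩
  rw [hderiv2.deriv, hderiv.eq_of_nhds]
  field_simp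
  ring

section SqrtQuadratic

variable (a b c : ℝ) {x : ℝ}

theorem hasDerivAt_sqrt_quadratic (hx : 0 < a * x ^ 2 + b * x + c) :
    HasDerivAt (fun y => √(a * y ^ 2 + b * y + c))
      ((2 * a * x + b) / (2 * √(a * x ^ 2 + b * x + c))) x := by
  have hP : HasDerivAt (fun y => a * y ^ 2 + b * y + c) (2 * a * x + b) x :=
    ((((hasDerivAt_pow 2 x).const_mul a).add ((hasDerivAt_id' x).const_mul b)).add_const
      c).congr_deriv (by ring)
  exact hP.sqrt hx.ne'

theorem hasDerivAt_deriv_sqrt_quadratic (hx : 0 < a * x ^ 2 + b * x + c) :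
    HasDerivAt (deriv fun y => √(a * y ^ 2 + b * y + c))
      ((4 * a * c - b ^ 2) / (4 * √(a * x ^ 2 + b * x + c) ^ 3)) x := by
  have hpos : ∀ᶠ y in 𝓝 x, 0 < a * y ^ 2 + b * y + c :=
    (show Continuous fun y => a * y ^ 2 + b * y + c by fun_prop).continuousAt.eventually
      (Ioi_mem_nhds hx)
  have hderiv : (deriv fun y => √(a * y ^ 2 + b * y + c)) =ᶠ[𝓝 x]
      fun y => (2 * a * y + b) / (2 * √(a * y ^ 2 + b * y + c)) := by
    filter_upwards [hpos] with y hy using (hasDerivAt_sqrt_quadratic a b c hy).deriv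
  have hs : 0 < √(a * x ^ 2 + b * x + c) := Real.sqrt_pos.mpr hx
  have hs2 : √(a * x ^ 2 + b * x + c) ^ 2 = a * x ^ 2 + b * x + c := Real.sq_sqrt hx.le
  refine (((hasDerivAt_id' x).const_mul (2 * a) |>.add_const b).div
    ((hasDerivAt_sqrt_quadratic a b c hx).const_mul 2) (by positivity)).congr_deriv ?_
    |>.congr_of_eventuallyEq hderiv
  set s := √(a * x ^ 2 + b * x + c)
  field_simp
  linear_combination 16 * a * hs2

end SqrtQuadratic

theorem sqrt_add_div_add_div_sq (a b c : ℝ) {x : ℝ} (hx : 0 < x) :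
    √(a + b / x + c / x ^ 2) = √(a * x ^ 2 + b * x + c) / x := by
  rw [← Real.sqrt_sq hx.le, ← Real.sqrt_div' _ (sq_nonneg x), Real.sqrt_sq hx.le]
  congr 1
  field_simp

/-- The Reissner–Nordström conformal factor
`W(r) = √(e^{−2t} + m/r + e^{2t}(m² − q²)/(4r²))` satisfies the radial
semilinear equation `W'' + (2/r)W' = −q²/(4r⁴W³)` on `(0, ∞)`. -/
theorem RN_conformal_factor_radial_equation (m q t : ℝ) (hq : |q| ≤ m) :
    let W : ℝ → ℝ := fun r =>
      Real.sqrt (Real.exp (-2 * t) + m / r + Real.exp (2 * t) * (m ^ 2 - q ^ 2) / (4 * r ^ 2))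
    ∀ r : ℝ, 0 < r →
      DifferentiableAt ℝ W r ∧ DifferentiableAt ℝ (deriv W) r ∧
        deriv (deriv W) r + (2 / r) * deriv W r = -q ^ 2 / (4 * r ^ 4 * (W r) ^ 3) := by
  intro W r hr
  set a := Real.exp (-2 * t)
  set c := Real.exp (2 * t) * (m ^ 2 - q ^ 2) / 4
  have hc : 0 ≤ c := by
    have hqm : q ^ 2 ≤ m ^ 2 := sq_abs q ▸ pow_le_pow_left₀ (abs_nonneg q) hq 2
    positivity
  have hP : ∀ x, 0 < x → 0 < a * x ^ 2 + m * x + c := fun x hx => by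
    have hm : 0 ≤ m := (abs_nonneg q).trans hq
    positivity
  have hW : W =ᶠ[𝓝 r] fun x => √(a * x ^ 2 + m * x + c) / x := by
    filter_upwards [Ioi_mem_nhds hr] with x hx
    simp only [W, a, c, ← div_div, sqrt_add_div_add_div_sq _ _ _ hx]
  obtain ⟨hWd, hW'd, hradial⟩ := radial_laplacian_of_eventuallyEq_div hr.ne'
    (by filter_upwards [Ioi_mem_nhds hr] with x hx using
      (hasDerivAt_sqrt_quadratic a m c (hP x hx)).differentiableAt)
    (hasDerivAt_deriv_sqrt_quadratic a m c (hP r hr)).differentiableAt hW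
  have hac : 4 * a * c = m ^ 2 - q ^ 2 := by
    have hexp : a * Real.exp (2 * t) = 1 := by rw [← Real.exp_add]; simp
    linear_combination (m ^ 2 - q ^ 2) * hexp
  refine ⟨hWd, hW'd, ?_⟩
  rw [hradial, (hasDerivAt_deriv_sqrt_quadratic a m c (hP r hr)).deriv, hW.eq_of_nhds, hac]
  field_simp
  ring
end

section
/- Let Λ > 0, ε > 0, s ∈ [0, 1], and φ ≥ 0 be real numbers. Then sΛ(ε − sφ)/(sφ + ε)³ + s²Λ²φ² / (8(sφ + ε)⁴) ≥ s(Λ − 8s)/(sφ + ε)². -/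
theorem young_step_sub_eq_sq_div {Λ ε s φ : ℝ} (h : s * φ + ε ≠ 0) :
    s * Λ * (ε - s * φ) / (s * φ + ε) ^ 3 + s ^ 2 * Λ ^ 2 * φ ^ 2 / (8 * (s * φ + ε) ^ 4) -
        s * (Λ - 8 * s) / (s * φ + ε) ^ 2 =
      (s * (8 * (s * φ + ε) - Λ * φ)) ^ 2 / (8 * (s * φ + ε) ^ 4) := by
  field_simp
  ring

theorem young_step_gradient_estimate_general (Λ ε s φ : ℝ) (hε : 0 < ε)
    (hs0 : 0 ≤ s) (hφ : 0 ≤ φ) :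
    s * (Λ - 8 * s) / (s * φ + ε) ^ 2 ≤
      s * Λ * (ε - s * φ) / (s * φ + ε) ^ 3 +
        s ^ 2 * Λ ^ 2 * φ ^ 2 / (8 * (s * φ + ε) ^ 4) := by
  have hD : 0 < s * φ + ε := by positivity
  rw [← sub_nonneg, young_step_sub_eq_sq_div hD.ne']
  positivity

/-- The Young's-inequality step in the interior gradient estimate:
`h'(φ) + h(φ)²/8 ≥ s(Λ − 8s)/(sφ + ε)²` for `h(φ) = sΛφ/(sφ + ε)²`. -/
theorem young_step_gradient_estimate (Λ ε s φ : ℝ) (hΛ : 0 < Λ) (hε : 0 < ε)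
    (hs0 : 0 ≤ s) (hs1 : s ≤ 1) (hφ : 0 ≤ φ) :
    s * (Λ - 8 * s) / (s * φ + ε) ^ 2 ≤
      s * Λ * (ε - s * φ) / (s * φ + ε) ^ 3 +
        s ^ 2 * Λ ^ 2 * φ ^ 2 / (8 * (s * φ + ε) ^ 4) :=
  young_step_gradient_estimate_general Λ ε s φ hε hs0 hφ
end
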